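/- Let X be a complete geodesic metric space for which there exists a quasi-isometry from X to a simplicial tree. Then there exists δ > 0 such that for all x, y ∈ X, every geodesic γ from x to y, every point p on the image of γ, and every continuous path c : [0,1] → X with c(0) = x and c(1) = y, there is some t ∈ [0,1] with d(c(t), p) ≤ δ. -/
import Mathlib

open SimpleGraph

variable {V : Type} {G : SimpleGraph V}

/-- In a tree, every path realizes the distance. -/
lemma tree_path_length (hT : G.IsTree) {a b : V} {p : G.Walk a b} (hp : p.IsPath) :
    p.length = G.dist a b := by
  classical
  obtain ⟨q, hq⟩ := hT.isConnected.exists_walk_length_eq_dist a b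
  have h1 : (⟨p, hp⟩ : G.Path a b) = ⟨q.bypass, q.bypass_isPath⟩ :=
    hT.IsAcyclic.path_unique _ _
  have h2 : p = q.bypass := congrArg Subtype.val h1
  have h3 : q.bypass.length ≤ q.length := q.length_bypass_le
  have h4 : G.dist a b ≤ p.length := SimpleGraph.dist_le p
  have h5 : p.length = q.bypass.length := by rw [h2]
  omega

/-- Splitting a path at a support vertex gives an exact distance decomposition. -/
lemma tree_split (hT : G.IsTree) {a b w : V} {p : G.Walk a b} (hp : p.IsPath)
    (hw : w ∈ p.support) : G.dist a w + G.dist w b = G.dist a b := by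
  classical
  have h1 : (p.takeUntil w hw).IsPath := hp.takeUntil hw
  have h2 : (p.dropUntil w hw).IsPath := hp.dropUntil hw
  have h4 : (p.takeUntil w hw).length + (p.dropUntil w hw).length = p.length := by
    conv_rhs => rw [← p.take_spec hw]
    rw [SimpleGraph.Walk.length_append]
  rw [← tree_path_length hT h1, ← tree_path_length hT h2, ← tree_path_length hT hp]
  exact h4

/-- Appending two paths that share only the junction vertex yields a path. -/
lemma path_append {a b c : V} {p : G.Walk a b} {q : G.Walk b c} (hp : p.IsPath)
    (hq : q.IsPath) (hdisj : ∀ x ∈ p.support, x ∈ q.support → x = b) :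
    (p.append q).IsPath := by
  apply SimpleGraph.Walk.IsPath.mk'
  rw [SimpleGraph.Walk.support_append]
  apply List.Nodup.append hp.support_nodup
  · have := hq.support_nodup
    rw [q.support_eq_cons] at this
    exact this.of_cons
  · intro x hx1 hx2
    have hx2' : x ∈ q.support := by
      rw [q.support_eq_cons]; exact List.mem_cons_of_mem _ hx2
    have hxb : x = b := hdisj x hx1 hx2'
    subst hxb
    have := hq.support_nodup
    rw [q.support_eq_cons] at this
    exact (List.nodup_cons.mp this).1 hx2

/-- In a tree, if `w` lies metrically between `a` and `v`, then every walk from `a`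
to `v` passes through `w`. -/
lemma tree_between_mem_support (hT : G.IsTree) {a v w : V}
    (h : G.dist a w + G.dist w v = G.dist a v) (W : G.Walk a v) : w ∈ W.support := by
  classical
  obtain ⟨p1, _⟩ := hT.isConnected.exists_walk_length_eq_dist a w
  obtain ⟨p2, _⟩ := hT.isConnected.exists_walk_length_eq_dist w v
  have hq1 : p1.bypass.IsPath := p1.bypass_isPath
  have hq2 : p2.bypass.IsPath := p2.bypass_isPath
  have hdisj : ∀ x ∈ p1.bypass.support, x ∈ p2.bypass.support → x = w := by
    intro x hx1 hx2
    have e1 := tree_split hT hq1 hx1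
    have e2 := tree_split hT hq2 hx2
    have tri : G.dist a v ≤ G.dist a x + G.dist x v := hT.isConnected.dist_triangle
    have cxw : G.dist x w = G.dist w x := SimpleGraph.dist_comm
    have hz : G.dist x w = 0 := by omega
    exact (hT.isConnected.dist_eq_zero_iff).mp hz
  have hQ : (p1.bypass.append p2.bypass).IsPath := path_append hq1 hq2 hdisj
  have h1 : (⟨W.bypass, W.bypass_isPath⟩ : G.Path a v) = ⟨_, hQ⟩ :=
    hT.IsAcyclic.path_unique _ _
  have hwQ : w ∈ (p1.bypass.append p2.bypass).support := by
    rw [SimpleGraph.Walk.mem_support_append_iff]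
    exact Or.inr p2.bypass.start_mem_support
  have hwB : w ∈ W.bypass.support := by
    have h2 : W.bypass = p1.bypass.append p2.bypass := congrArg Subtype.val h1
    rw [h2]; exact hwQ
  exact W.support_bypass_subset hwB

/-- Exact medians exist in trees. -/
lemma tree_median (hT : G.IsTree) (a b z : V) :
    ∃ m : V, G.dist a m + G.dist m b = G.dist a b ∧
      G.dist z m + G.dist m a = G.dist z a ∧ G.dist z m + G.dist m b = G.dist z b := by
  classical
  obtain ⟨p1, _⟩ := hT.isConnected.exists_walk_length_eq_dist z a
  obtain ⟨p2, _⟩ := hT.isConnected.exists_walk_length_eq_dist z b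
  have hq1 : p1.bypass.IsPath := p1.bypass_isPath
  have hq2 : p2.bypass.IsPath := p2.bypass_isPath
  set S : Finset V := p1.bypass.support.toFinset ∩ p2.bypass.support.toFinset with hS
  have hzS : z ∈ S := by
    simp only [hS, Finset.mem_inter, List.mem_toFinset]
    exact ⟨p1.bypass.start_mem_support, p2.bypass.start_mem_support⟩
  obtain ⟨m, hmS, hmax⟩ := S.exists_max_image (fun x => G.dist z x) ⟨z, hzS⟩
  simp only [hS, Finset.mem_inter, List.mem_toFinset] at hmS
  obtain ⟨hm1, hm2⟩ := hmS
  have e1 : G.dist z m + G.dist m a = G.dist z a := tree_split hT hq1 hm1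
  have e2 : G.dist z m + G.dist m b = G.dist z b := tree_split hT hq2 hm2
  refine ⟨m, ?_, e1, e2⟩
  -- the two branches from m to a and from m to b meet only at m
  have hr1 : (p1.bypass.dropUntil m hm1).IsPath := hq1.dropUntil hm1
  have hr2 : (p2.bypass.dropUntil m hm2).IsPath := hq2.dropUntil hm2
  have hdisj : ∀ x ∈ (p1.bypass.dropUntil m hm1).reverse.support,
      x ∈ (p2.bypass.dropUntil m hm2).support → x = m := by
    intro x hx1 hx2
    rw [SimpleGraph.Walk.support_reverse, List.mem_reverse] at hx1
    have hxq1 : x ∈ p1.bypass.support := p1.bypass.support_dropUntil_subset hm1 hx1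
    have hxq2 : x ∈ p2.bypass.support := p2.bypass.support_dropUntil_subset hm2 hx2
    have hxS : x ∈ S := by
      simp only [hS, Finset.mem_inter, List.mem_toFinset]; exact ⟨hxq1, hxq2⟩
    have hle : G.dist z x ≤ G.dist z m := hmax x hxS
    have e3 : G.dist m x + G.dist x a = G.dist m a := tree_split hT hr1 hx1
    have e4 : G.dist z x + G.dist x a = G.dist z a := tree_split hT hq1 hxq1
    have hz : G.dist m x = 0 := by omega
    have : m = x := (hT.isConnected.dist_eq_zero_iff).mp hz
    exact this.symm
  have hP : ((p1.bypass.dropUntil m hm1).reverse.append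
      (p2.bypass.dropUntil m hm2)).IsPath := path_append hr1.reverse hr2 hdisj
  have hlen := tree_path_length hT hP
  rw [SimpleGraph.Walk.length_append, SimpleGraph.Walk.length_reverse] at hlen
  have l1 : (p1.bypass.dropUntil m hm1).length = G.dist m a := tree_path_length hT hr1
  have l2 : (p2.bypass.dropUntil m hm2).length = G.dist m b := tree_path_length hT hr2
  rw [l1, l2] at hlen
  have cam : G.dist a m = G.dist m a := SimpleGraph.dist_comm
  omega

/-- Crossing lemma: a coarse discrete path from `a` to `b` must pass close to any
vertex `w` lying between `a` and `b`. -/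
lemma tree_cross (hT : G.IsTree) {a b w : V} (hw : G.dist a w + G.dist w b = G.dist a b)
    {n : ℕ} {v : ℕ → V} (h0 : v 0 = a) (hn : v n = b) {M : ℝ} (hM : 0 ≤ M)
    (hstep : ∀ i < n, (G.dist (v i) (v (i+1)) : ℝ) ≤ M) :
    ∃ i ≤ n, (G.dist (v i) w : ℝ) ≤ M := by
  classical
  have hex : ∃ i, i ≤ n ∧ G.dist a w + G.dist w (v i) = G.dist a (v i) :=
    ⟨n, le_refl n, by rw [hn]; exact hw⟩
  set j := Nat.find hex with hj
  obtain ⟨hjn, hjP⟩ := Nat.find_spec hex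
  by_cases hj0 : j = 0
  · rw [← hj, hj0] at hjP
    refine ⟨0, Nat.zero_le n, ?_⟩
    have h1 : G.dist a (v 0) = 0 := by rw [h0, SimpleGraph.dist_self]
    have h2 : G.dist (v 0) w = G.dist w (v 0) := SimpleGraph.dist_comm
    have : G.dist (v 0) w = 0 := by omega
    rw [this]; simpa using hM
  · obtain ⟨k, hk⟩ := Nat.exists_eq_succ_of_ne_zero hj0
    rw [← hj, hk] at hjP hjn
    refine ⟨k+1, hjn, ?_⟩
    have hknot : ¬ (k ≤ n ∧ G.dist a w + G.dist w (v k) = G.dist a (v k)) := by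
      apply Nat.find_min hex
      omega
    have hknot' : ¬ (G.dist a w + G.dist w (v k) = G.dist a (v k)) := by
      intro hcon; exact hknot ⟨by omega, hcon⟩
    obtain ⟨W1, _⟩ := hT.isConnected.exists_walk_length_eq_dist a (v k)
    obtain ⟨W2, _⟩ := hT.isConnected.exists_walk_length_eq_dist (v k) (v (k+1))
    have hmem : w ∈ (W1.bypass.append W2.bypass).support :=
      tree_between_mem_support hT hjP _
    rw [SimpleGraph.Walk.mem_support_append_iff] at hmem
    rcases hmem with hmem | hmem
    · exact absurd (tree_split hT W1.bypass_isPath hmem) hknot'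
    · have e := tree_split hT W2.bypass_isPath hmem
      have h1 : G.dist (v (k+1)) w = G.dist w (v (k+1)) := SimpleGraph.dist_comm
      have h2 : G.dist (v (k+1)) w ≤ G.dist (v k) (v (k+1)) := by omega
      calc (G.dist (v (k+1)) w : ℝ) ≤ (G.dist (v k) (v (k+1)) : ℝ) := Nat.cast_le.mpr h2
        _ ≤ M := hstep k (by omega)

/-- Along a geodesic segment, some point maps close to any vertex lying between
the images of the endpoints. -/
lemma seg_gamma {X : Type} [MetricSpace X] (hT : G.IsTree) (f : X → V) {K C : ℝ}
    (hK : 1 ≤ K) (hC : 0 ≤ C)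
    (hup : ∀ x₁ x₂ : X, (G.dist (f x₁) (f x₂) : ℝ) ≤ K * dist x₁ x₂ + C)
    (γ : ℝ → X) (dd : ℝ)
    (hiso : ∀ s ∈ Set.Icc (0:ℝ) dd, ∀ t ∈ Set.Icc (0:ℝ) dd, dist (γ s) (γ t) = |s - t|)
    {α β : ℝ} (h0 : 0 ≤ α) (hαβ : α ≤ β) (hβ : β ≤ dd) (m : V)
    (hm : G.dist (f (γ α)) m + G.dist m (f (γ β)) = G.dist (f (γ α)) (f (γ β))) :
    ∃ s, α ≤ s ∧ s ≤ β ∧ (G.dist (f (γ s)) m : ℝ) ≤ K + C := by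
  set n : ℕ := max 1 ⌈β - α⌉₊ with hn
  have hn1 : (1:ℝ) ≤ (n:ℝ) := by exact_mod_cast le_max_left 1 ⌈β - α⌉₊
  have hn0 : (0:ℝ) < (n:ℝ) := by linarith
  have hrn : β - α ≤ (n:ℝ) :=
    le_trans (Nat.le_ceil _) (by exact_mod_cast le_max_right 1 ⌈β - α⌉₊)
  set σ : ℝ := (β - α)/n with hσ
  have hσ0 : 0 ≤ σ := div_nonneg (by linarith) (le_of_lt hn0)
  have hσ1 : σ ≤ 1 := by rw [hσ, div_le_one hn0]; linarith
  have hnσ : (n:ℝ) * σ = β - α := by rw [hσ]; field_simp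
  have hpt : ∀ i : ℕ, i ≤ n → (α + i * σ) ∈ Set.Icc α β := by
    intro i hi
    have hi' : (i:ℝ) ≤ n := Nat.cast_le.mpr hi
    have hiσ : (i:ℝ) * σ ≤ (n:ℝ) * σ := by nlinarith
    constructor
    · nlinarith [Nat.cast_nonneg (α := ℝ) i]
    · linarith [hnσ ▸ hiσ]
  have hpt' : ∀ i : ℕ, i ≤ n → (α + i*σ) ∈ Set.Icc (0:ℝ) dd := fun i hi =>
    ⟨by linarith [(hpt i hi).1], by linarith [(hpt i hi).2]⟩
  have h0v : f (γ (α + ((0:ℕ):ℝ) * σ)) = f (γ α) := by norm_num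
  have hnv : f (γ (α + ((n:ℕ):ℝ) * σ)) = f (γ β) := by
    rw [hnσ]
    have : α + (β - α) = β := by ring
    rw [this]
  have hsteps : ∀ i, i < n → (G.dist (f (γ (α + (i:ℝ) * σ))) (f (γ (α + ((i+1:ℕ):ℝ) * σ))) : ℝ) ≤ K + C := by
    intro i hi
    have h1 := hpt' i (le_of_lt hi)
    have h2 := hpt' (i+1) hi
    have hdist : dist (γ (α + (i:ℝ)*σ)) (γ (α + ((i+1:ℕ):ℝ)*σ)) = σ := by
      rw [hiso _ h1 _ h2]
      push_cast
      rw [show (α + (i:ℝ)*σ) - (α + ((i:ℝ)+1)*σ) = -σ by ring, abs_neg, abs_of_nonneg hσ0]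
    calc (G.dist (f (γ (α + (i:ℝ)*σ))) (f (γ (α + ((i+1:ℕ):ℝ)*σ))) : ℝ)
        ≤ K * dist (γ (α + (i:ℝ)*σ)) (γ (α + ((i+1:ℕ):ℝ)*σ)) + C := hup _ _
      _ = K * σ + C := by rw [hdist]
      _ ≤ K + C := by nlinarith
  obtain ⟨i, hin, hival⟩ := tree_cross hT hm (v := fun i : ℕ => f (γ (α + (i:ℝ) * σ)))
    h0v hnv (M := K + C) (by linarith) hsteps
  exact ⟨α + i*σ, (hpt i hin).1, (hpt i hin).2, hival⟩

/-- Along a continuous path, some point maps close to any vertex lying between the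
images of the endpoints. -/
lemma seg_path {X : Type} [MetricSpace X] (hT : G.IsTree) (f : X → V) {K C : ℝ}
    (hK : 1 ≤ K) (hC : 0 ≤ C)
    (hup : ∀ x₁ x₂ : X, (G.dist (f x₁) (f x₂) : ℝ) ≤ K * dist x₁ x₂ + C)
    (c : ℝ → X) (hc : ContinuousOn c (Set.Icc (0:ℝ) 1)) (m : V)
    (hm : G.dist (f (c 0)) m + G.dist m (f (c 1)) = G.dist (f (c 0)) (f (c 1))) :
    ∃ t ∈ Set.Icc (0:ℝ) 1, (G.dist (f (c t)) m : ℝ) ≤ K + C := by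
  have huc : UniformContinuousOn c (Set.Icc 0 1) :=
    isCompact_Icc.uniformContinuousOn_of_continuous hc
  rw [Metric.uniformContinuousOn_iff_le] at huc
  obtain ⟨η, hη, hmod⟩ := huc 1 one_pos
  set n : ℕ := max 1 ⌈1/η⌉₊ with hn
  have hn1 : (1:ℝ) ≤ (n:ℝ) := by exact_mod_cast le_max_left 1 ⌈1/η⌉₊
  have hn0 : (0:ℝ) < (n:ℝ) := by linarith
  have hrn : 1/η ≤ (n:ℝ) :=
    le_trans (Nat.le_ceil _) (by exact_mod_cast le_max_right 1 ⌈1/η⌉₊)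
  have hinv : 1/(n:ℝ) ≤ η := by
    rw [div_le_iff₀ hn0]
    rw [div_le_iff₀ hη] at hrn
    linarith
  have hpt : ∀ i : ℕ, i ≤ n → ((i:ℝ)/n) ∈ Set.Icc (0:ℝ) 1 := by
    intro i hi
    have hi' : (i:ℝ) ≤ n := Nat.cast_le.mpr hi
    exact ⟨div_nonneg (Nat.cast_nonneg i) (le_of_lt hn0), by rw [div_le_one hn0]; exact hi'⟩
  have h0v : f (c (((0:ℕ):ℝ)/n)) = f (c 0) := by norm_num
  have hnv : f (c (((n:ℕ):ℝ)/n)) = f (c 1) := by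
    rw [div_self (ne_of_gt hn0)]
  have hsteps : ∀ i, i < n → (G.dist (f (c ((i:ℝ)/n))) (f (c (((i+1:ℕ):ℝ)/n))) : ℝ) ≤ K + C := by
    intro i hi
    have h1 := hpt i (le_of_lt hi)
    have h2 := hpt (i+1) hi
    have hdd : dist ((i:ℝ)/n) (((i+1:ℕ):ℝ)/n) ≤ η := by
      rw [Real.dist_eq]
      push_cast
      rw [show (i:ℝ)/n - ((i:ℝ)+1)/n = -(1/n) by ring, abs_neg,
        abs_of_nonneg (by positivity)]
      exact hinv
    have hcd : dist (c ((i:ℝ)/n)) (c (((i+1:ℕ):ℝ)/n)) ≤ 1 := hmod _ h1 _ h2 hdd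
    calc (G.dist (f (c ((i:ℝ)/n))) (f (c (((i+1:ℕ):ℝ)/n))) : ℝ)
        ≤ K * dist (c ((i:ℝ)/n)) (c (((i+1:ℕ):ℝ)/n)) + C := hup _ _
      _ ≤ K + C := by nlinarith
  obtain ⟨i, hin, hival⟩ := tree_cross hT hm (v := fun i : ℕ => f (c ((i:ℝ)/n)))
    h0v hnv (M := K + C) (by linarith) hsteps
  exact ⟨(i:ℝ)/n, hpt i hin, hival⟩

/-- a complete geodesic metric space quasi-isometric to a simplicial tree
satisfies the bottleneck property. -/
theorem stmt_2 (X : Type) [MetricSpace X] [CompleteSpace X]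
    -- X is geodesic
    (hgeo : ∀ x y : X, ∃ σ : ℝ → X, σ 0 = x ∧ σ (dist x y) = y ∧
      ∀ s ∈ Set.Icc (0:ℝ) (dist x y), ∀ t ∈ Set.Icc (0:ℝ) (dist x y),
        dist (σ s) (σ t) = |s - t|)
    -- there is a quasi-isometry from X to a simplicial tree
    (hqt : ∃ (V : Type) (T : SimpleGraph V), T.IsTree ∧
      ∃ (f : X → V) (K C : ℝ), 1 ≤ K ∧ 0 ≤ C ∧
        (∀ x₁ x₂ : X, dist x₁ x₂ / K - C ≤ (T.dist (f x₁) (f x₂) : ℝ) ∧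
          (T.dist (f x₁) (f x₂) : ℝ) ≤ K * dist x₁ x₂ + C) ∧
        (∀ v : V, ∃ x : X, (T.dist v (f x) : ℝ) ≤ C)) :
    ∃ δ : ℝ, 0 < δ ∧
      ∀ x y : X, ∀ γ : ℝ → X,
        -- γ is a geodesic from x to y
        (γ 0 = x ∧ γ (dist x y) = y ∧
          ∀ s ∈ Set.Icc (0:ℝ) (dist x y), ∀ t ∈ Set.Icc (0:ℝ) (dist x y),
            dist (γ s) (γ t) = |s - t|) →
        -- p = γ u is a point on the image of γ
        ∀ u ∈ Set.Icc (0:ℝ) (dist x y),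
        -- c is a continuous path from x to y
        ∀ c : ℝ → X, ContinuousOn c (Set.Icc (0:ℝ) 1) → c 0 = x → c 1 = y →
          ∃ t ∈ Set.Icc (0:ℝ) 1, dist (c t) (γ u) ≤ δ := by
  obtain ⟨V, T, hT, f, K, C, hK, hC, hf, -⟩ := hqt
  have hlow : ∀ x₁ x₂ : X, dist x₁ x₂ / K - C ≤ (T.dist (f x₁) (f x₂) : ℝ) :=
    fun a b => (hf a b).1
  have hup : ∀ x₁ x₂ : X, (T.dist (f x₁) (f x₂) : ℝ) ≤ K * dist x₁ x₂ + C :=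
    fun a b => (hf a b).2
  have hK0 : (0:ℝ) < K := by linarith
  obtain ⟨M, hMdef⟩ : ∃ M : ℝ, M = K + C := ⟨_, rfl⟩
  have hM0 : (0:ℝ) < M := by rw [hMdef]; linarith
  obtain ⟨D1, hD1def⟩ : ∃ D1 : ℝ, D1 = K*(K*(2*M + C)) + C + M := ⟨_, rfl⟩
  have hD10 : (0:ℝ) < D1 := by
    rw [hD1def]
    nlinarith [mul_pos hK0 (mul_pos hK0 (by linarith : (0:ℝ) < 2*M + C))]
  refine ⟨K*(M + D1 + C), mul_pos hK0 (by linarith), ?_⟩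
  intro x y γ hγ u hu c hcont hc0 hc1
  obtain ⟨hγ0, hγd, hiso⟩ := hγ
  obtain ⟨hu0, hud⟩ := hu
  obtain ⟨m, hm1, hm2, hm3⟩ := tree_median hT (f x) (f y) (f (γ u))
  -- Step A : a point of γ [0,u] maps close to m
  have hmA : T.dist (f (γ 0)) m + T.dist m (f (γ u)) = T.dist (f (γ 0)) (f (γ u)) := by
    rw [hγ0]
    have c1 : T.dist (f x) m = T.dist m (f x) := SimpleGraph.dist_comm
    have c2 : T.dist m (f (γ u)) = T.dist (f (γ u)) m := SimpleGraph.dist_comm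
    have c3 : T.dist (f x) (f (γ u)) = T.dist (f (γ u)) (f x) := SimpleGraph.dist_comm
    omega
  obtain ⟨s, hs0, hsu, hsm⟩ :=
    seg_gamma hT f hK hC hup γ (dist x y) hiso (le_refl 0) hu0 hud m hmA
  -- Step B : a point of γ [u,d] maps close to m
  have hmB : T.dist (f (γ u)) m + T.dist m (f (γ (dist x y))) =
      T.dist (f (γ u)) (f (γ (dist x y))) := by rw [hγd]; exact hm3
  obtain ⟨s', hus', hs'd, hs'm⟩ :=
    seg_gamma hT f hK hC hup γ (dist x y) hiso hu0 hud (le_refl _) m hmB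
  -- Step C : γ u itself maps close to m
  have hsIcc : s ∈ Set.Icc (0:ℝ) (dist x y) := ⟨hs0, by linarith⟩
  have hs'Icc : s' ∈ Set.Icc (0:ℝ) (dist x y) := ⟨by linarith, hs'd⟩
  have huIcc : u ∈ Set.Icc (0:ℝ) (dist x y) := ⟨hu0, hud⟩
  have hss' : dist (γ s) (γ s') = s' - s := by
    rw [hiso s hsIcc s' hs'Icc, abs_of_nonpos (by linarith)]; ring
  have htri : (T.dist (f (γ s)) (f (γ s')) : ℝ) ≤ 2*M := by
    have h1 : T.dist (f (γ s)) (f (γ s')) ≤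
        T.dist (f (γ s)) m + T.dist m (f (γ s')) := hT.isConnected.dist_triangle
    have h2 : T.dist m (f (γ s')) = T.dist (f (γ s')) m := SimpleGraph.dist_comm
    rw [h2] at h1
    have h3 : ((T.dist (f (γ s)) (f (γ s')) : ℕ) : ℝ) ≤
        ((T.dist (f (γ s)) m : ℕ) : ℝ) + ((T.dist (f (γ s')) m : ℕ) : ℝ) := by
      exact_mod_cast h1
    linarith [hMdef]
  have hss'K : s' - s ≤ K * (2*M + C) := by
    have h1 := hlow (γ s) (γ s')
    rw [hss'] at h1
    have h2 : (s' - s)/K ≤ 2*M + C := by linarith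
    rw [div_le_iff₀ hK0] at h2
    nlinarith
  have hzm : (T.dist (f (γ u)) m : ℝ) ≤ D1 := by
    have h1 : T.dist (f (γ u)) m ≤ T.dist (f (γ u)) (f (γ s)) + T.dist (f (γ s)) m :=
      hT.isConnected.dist_triangle
    have h1' : ((T.dist (f (γ u)) m : ℕ) : ℝ) ≤
        ((T.dist (f (γ u)) (f (γ s)) : ℕ) : ℝ) + ((T.dist (f (γ s)) m : ℕ) : ℝ) := by
      exact_mod_cast h1
    have h2 : (T.dist (f (γ u)) (f (γ s)) : ℝ) ≤ K * (u - s) + C := by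
      have := hup (γ u) (γ s)
      rwa [hiso u huIcc s hsIcc, abs_of_nonneg (by linarith)] at this
    have h3 : u - s ≤ s' - s := by linarith
    have h4 : K * (u - s) ≤ K * (K * (2*M + C)) := by nlinarith
    rw [hD1def]
    linarith [hMdef]
  -- Step D : a point of c maps close to m
  have hmD : T.dist (f (c 0)) m + T.dist m (f (c 1)) = T.dist (f (c 0)) (f (c 1)) := by
    rw [hc0, hc1]; exact hm1
  obtain ⟨t, ht, htm⟩ := seg_path hT f hK hC hup c hcont m hmD
  -- Step E : conclude
  refine ⟨t, ht, ?_⟩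
  have h1 : T.dist (f (c t)) (f (γ u)) ≤ T.dist (f (c t)) m + T.dist m (f (γ u)) :=
    hT.isConnected.dist_triangle
  have h1' : ((T.dist (f (c t)) (f (γ u)) : ℕ) : ℝ) ≤
      ((T.dist (f (c t)) m : ℕ) : ℝ) + ((T.dist m (f (γ u)) : ℕ) : ℝ) := by
    exact_mod_cast h1
  have h2 : T.dist m (f (γ u)) = T.dist (f (γ u)) m := SimpleGraph.dist_comm
  rw [h2] at h1'
  have h3 : (T.dist (f (c t)) (f (γ u)) : ℝ) ≤ M + D1 := by linarith [hMdef]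
  have h4 := hlow (c t) (γ u)
  have h5 : dist (c t) (γ u) / K ≤ M + D1 + C := by linarith
  rw [div_le_iff₀ hK0] at h5
  nlinarith
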